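/- arXiv:1105.2269 — 3 statements merged into one kernel-verified Lean document; each statement's English description precedes it below -/
import Mathlib

section
/- Let D be an invertible diagonal n×n complex matrix such that D_{ii}·D_{jj}⁻¹ ≠ 1 for all i ≠ j, and let C be a unipotent upper triangular n×n complex matrix. Then there exists a unique unipotent upper triangular matrix T such that T⁻¹·(C·D)·T = D. In particular C·D is diagonalizable and the j-th column of T is an eigenvector of C·D with eigenvalue D_{jj}. -/
/-!
`M = C * diagonal d` is upper triangular with pairwise distinct diagonal entries `d i`, and for an
invertible `T` the equation `T⁻¹ M T = diagonal d` says that the `j`-th column of `T` is a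
`d j`-eigenvector of `M`. For such `M`, the `M j j`-eigenvector `v` with `v j = 1` and `v l = 0`
for `l > j` exists and is unique. Uniqueness: if `k` is the last nonzero coordinate of an
eigenvector, then its eigenvalue is `M k k`. Existence: writing `charpoly M = (X - M j j) q`,
Cayley–Hamilton makes every column of `q(M)` an `M j j`-eigenvector, and the `j`-th one has
`j`-th entry `q (M j j) = ∏_{i ≠ j} (M j j - M i i) ≠ 0`.
-/

open Matrix Polynomial

/-- A matrix is unipotent upper triangular if it is upper triangular with all
diagonal entries equal to `1`. -/
def IsUnipotentUpper {n : ℕ} (T : Matrix (Fin n) (Fin n) ℂ) : Prop :=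
  (∀ i j : Fin n, j < i → T i j = 0) ∧ (∀ i : Fin n, T i i = 1)

namespace Matrix

section

variable {ι K : Type*} [Fintype ι] [LinearOrder ι] [Field K] {M : Matrix ι ι K}

theorem IsUpperTriangular.mul_apply_self {A B : Matrix ι ι K} (hA : A.IsUpperTriangular)
    (hB : B.IsUpperTriangular) (i : ι) : (A * B) i i = A i i * B i i := by
  rw [mul_apply, Finset.sum_eq_single i]
  · intro k _ hki
    rcases hki.lt_or_gt with hki | hki
    · rw [hA hki, zero_mul]
    · rw [hB hki, mul_zero]
  · simp

theorem IsUpperTriangular.aeval (hM : M.IsUpperTriangular) (p : K[X]) :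
    (Polynomial.aeval M p).IsUpperTriangular :=
  Algebra.adjoin_le (S := blockTriangularSubalgebra K K id) (Set.singleton_subset_iff.2 hM)
    (aeval_mem_adjoin_singleton K M)

theorem IsUpperTriangular.aeval_apply_self (hM : M.IsUpperTriangular) (p : K[X]) (i : ι) :
    Polynomial.aeval M p i i = p.eval (M i i) := by
  induction p using Polynomial.induction_on' with
  | add p q hp hq => simp [hp, hq]
  | monomial n a =>
    induction n with
    | zero => simp [algebraMap_eq_diagonal]
    | succ n ih =>
      rw [← monomial_mul_X, map_mul, aeval_X, (hM.aeval _).mul_apply_self hM, ih, eval_mul_X]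

theorem IsUpperTriangular.mulVec_apply_of_forall_lt (hM : M.IsUpperTriangular) {v : ι → K}
    {k : ι} (hv : ∀ l, k < l → v l = 0) : (M *ᵥ v) k = M k k * v k := by
  rw [mulVec, dotProduct, Finset.sum_eq_single k]
  · intro l _ hlk
    rcases hlk.lt_or_gt with hlk | hlk
    · rw [hM hlk, zero_mul]
    · rw [hv l hlk, mul_zero]
  · simp

theorem IsUpperTriangular.eq_zero_of_mulVec_eq_smul (hM : M.IsUpperTriangular)
    (hdiag : Function.Injective M.diag) {v : ι → K} {j : ι} (hv : ∀ l, j ≤ l → v l = 0)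
    (hMv : M *ᵥ v = M j j • v) : v = 0 := by
  classical
  by_contra hne
  obtain ⟨k, hk, hmax⟩ := Finset.exists_max_image {l | v l ≠ 0} id
    (by simpa [Finset.Nonempty, funext_iff] using hne)
  simp only [Finset.mem_filter_univ, id] at hk hmax
  have hlast : ∀ l, k < l → v l = 0 := fun l hkl => by
    by_contra h; exact (hmax l h).not_gt hkl
  have hkk : M k k = M j j := mul_right_cancel₀ hk <| by
    rw [← hM.mulVec_apply_of_forall_lt hlast, hMv, Pi.smul_apply, smul_eq_mul]
  exact hk (hv k (hdiag hkk).ge)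

theorem IsUpperTriangular.exists_eigenvector (hM : M.IsUpperTriangular)
    (hdiag : Function.Injective M.diag) (j : ι) :
    ∃ v : ι → K, v j = 1 ∧ (∀ l, j < l → v l = 0) ∧ M *ᵥ v = M j j • v := by
  classical
  obtain ⟨q, hchar, hq⟩ : ∃ q : K[X], M.charpoly = (X - C (M j j)) * q ∧ q.eval (M j j) ≠ 0 := by
    refine ⟨∏ i ∈ Finset.univ.erase j, (X - C (M i i)), ?_, ?_⟩
    · rw [charpoly_of_isUpperTriangular M hM,
        Finset.mul_prod_erase _ (fun i => X - C (M i i)) (Finset.mem_univ j)]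
    · rw [eval_prod, Finset.prod_ne_zero_iff]
      intro i hi
      rw [eval_sub, eval_X, eval_C, sub_ne_zero]
      exact fun h => Finset.ne_of_mem_erase hi (hdiag h.symm)
  have hMP : M * Polynomial.aeval M q = M j j • Polynomial.aeval M q := by
    have h := aeval_self_charpoly M
    rwa [hchar, map_mul, map_sub, aeval_X, aeval_C, sub_mul, sub_eq_zero, ← Algebra.smul_def] at h
  have hqj : Polynomial.aeval M q j j ≠ 0 := by rwa [hM.aeval_apply_self]
  refine ⟨(Polynomial.aeval M q j j)⁻¹ • fun i => Polynomial.aeval M q i j, by simp [hqj],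
    fun l hl => by simp [hM.aeval q hl], ?_⟩
  rw [mulVec_smul, smul_comm]
  congr 1
  ext i
  simpa [mul_apply, mulVec, dotProduct] using congrFun (congrFun hMP i) j

theorem IsUpperTriangular.existsUnique_eigenvector (hM : M.IsUpperTriangular)
    (hdiag : Function.Injective M.diag) (j : ι) :
    ∃! v : ι → K, v j = 1 ∧ (∀ l, j < l → v l = 0) ∧ M *ᵥ v = M j j • v := by
  obtain ⟨v, hv⟩ := hM.exists_eigenvector hdiag j
  refine ⟨v, hv, fun w hw => sub_eq_zero.1 (hM.eq_zero_of_mulVec_eq_smul hdiag (j := j) ?_ ?_)⟩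
  · intro l hl
    rcases hl.eq_or_lt with rfl | hl
    · simp [hw.1, hv.1]
    · simp [hw.2.1 l hl, hv.2.1 l hl]
  · rw [mulVec_sub, hw.2.2, hv.2.2, smul_sub]

end

section

variable {ι R : Type*} [Fintype ι] [DecidableEq ι] [CommRing R]

theorem inv_mul_mul_eq_iff {T M D : Matrix ι ι R} (hT : IsUnit T.det) :
    T⁻¹ * M * T = D ↔ M * T = T * D := by
  have := invertibleOfIsUnitDet T hT
  rw [Matrix.mul_assoc, inv_mul_eq_iff_eq_mul_of_invertible]

theorem mul_diagonal_eq_iff {M T : Matrix ι ι R} {d : ι → R} :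
    M * T = T * diagonal d ↔ ∀ j, M *ᵥ (fun i => T i j) = d j • fun i => T i j := by
  simp only [← Matrix.ext_iff, mul_diagonal]
  simp only [funext_iff, mulVec, dotProduct, mul_apply,
    Pi.smul_apply, smul_eq_mul, mul_comm (d _)]
  exact forall_comm

end

end Matrix

theorem IsUnipotentUpper.isUpperTriangular {n : ℕ} {T : Matrix (Fin n) (Fin n) ℂ}
    (hT : IsUnipotentUpper T) : T.IsUpperTriangular :=
  fun i j h => hT.1 i j h

theorem IsUnipotentUpper.isUnit_det {n : ℕ} {T : Matrix (Fin n) (Fin n) ℂ}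
    (hT : IsUnipotentUpper T) : IsUnit T.det := by
  simp [det_of_isUpperTriangular hT.isUpperTriangular, hT.2]

/-- If `D = diagonal d` is invertible with `d i · (d j)⁻¹ ≠ 1` for `i ≠ j`
(nonresonance) and `C` is unipotent upper triangular, then there is a unique
unipotent upper triangular `T` with `T⁻¹ (C·D) T = D`; in particular `C·D` is
diagonalizable and the `j`-th column of `T` is an eigenvector of `C·D` with
eigenvalue `d j`. -/
theorem unique_unipotent_diagonalizer
    {n : ℕ} (d : Fin n → ℂ) (hd : ∀ i, d i ≠ 0)
    (hres : ∀ i j : Fin n, i ≠ j → d i * (d j)⁻¹ ≠ 1)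
    (C : Matrix (Fin n) (Fin n) ℂ) (hC : IsUnipotentUpper C) :
    (∃! T : Matrix (Fin n) (Fin n) ℂ,
        IsUnipotentUpper T ∧ T⁻¹ * (C * Matrix.diagonal d) * T = Matrix.diagonal d) ∧
    (∀ T : Matrix (Fin n) (Fin n) ℂ,
        IsUnipotentUpper T → T⁻¹ * (C * Matrix.diagonal d) * T = Matrix.diagonal d →
        ∀ j : Fin n,
          (C * Matrix.diagonal d) *ᵥ (fun i => T i j) = d j • fun i => T i j) := by
  set M := C * diagonal d
  have hM : M.IsUpperTriangular := hC.isUpperTriangular.mul (blockTriangular_diagonal d)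
  have hMd : ∀ i, M i i = d i := fun i => by simp [M, hC.2 i]
  have hinj : Function.Injective M.diag := fun i j h => by
    by_contra hij
    exact hres i j hij (by rw [show d i = d j by simpa [hMd] using h, mul_inv_cancel₀ (hd j)])
  have hcols : ∀ T, IsUnipotentUpper T → (T⁻¹ * M * T = diagonal d ↔
      ∀ j, M *ᵥ (fun i => T i j) = d j • fun i => T i j) := fun T hT =>
    (inv_mul_mul_eq_iff hT.isUnit_det).trans mul_diagonal_eq_iff
  choose v hv huniq using fun j => hM.existsUnique_eigenvector hinj j
  have hT₀ : IsUnipotentUpper (of fun i j => v j i) :=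
    ⟨fun i j h => (hv j).2.1 i h, fun i => (hv i).1⟩
  refine ⟨⟨of fun i j => v j i, ⟨hT₀, (hcols _ hT₀).2 fun j => ?_⟩, ?_⟩,
    fun T hT hTM => (hcols T hT).1 hTM⟩
  · simpa [hMd] using (hv j).2.2
  · rintro T ⟨hT, hTM⟩
    ext i j
    refine congrFun (huniq j (fun i => T i j) ⟨hT.2 j, fun l hl => hT.1 l j hl, ?_⟩) i
    rw [hMd]
    exact (hcols T hT).1 hTM j
end

section
/- Let D be an invertible diagonal n×n complex matrix with Δ_{ij} := D_{ii}·D_{jj}⁻¹ ≠ 1 for i ≠ j, let C be unipotent upper triangular, and let T be the unique unipotent upper triangular matrix with T⁻¹(CD)T = D. Then the off-diagonal entries of T satisfy the recursion T_{ij}·(1 − Δ_{ij}) = C_{ij} + Σ_{i<k<j} C_{ik}·T_{kj}·Δ_{kj} for all i < j. Equivalently, C = T·D·T⁻¹·D⁻¹ (the multiplicative commutator [T,D]). -/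
open Matrix Finset

/-- Recursion for the unipotent diagonalizer: if `T⁻¹(CD)T = D` with `C`, `T`
unipotent upper triangular and `D = diagonal d` nonresonant, then with
`Δ_{ij} = d i (d j)⁻¹` one has
`T_{ij}(1 − Δ_{ij}) = C_{ij} + Σ_{i<k<j} C_{ik} T_{kj} Δ_{kj}` for `i < j`,
and equivalently `C = T D T⁻¹ D⁻¹`. -/
theorem unipotent_diagonalizer_recursion
    {n : ℕ} (d : Fin n → ℂ) (hd : ∀ i, d i ≠ 0)
    (hres : ∀ i j : Fin n, i ≠ j → d i * (d j)⁻¹ ≠ 1)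
    (C T : Matrix (Fin n) (Fin n) ℂ)
    (hC : IsUnipotentUpper C) (hT : IsUnipotentUpper T)
    (hconj : T⁻¹ * (C * Matrix.diagonal d) * T = Matrix.diagonal d) :
    (∀ i j : Fin n, i < j →
      T i j * (1 - d i * (d j)⁻¹) =
        C i j + ∑ k ∈ Finset.Ioo i j, C i k * T k j * (d k * (d j)⁻¹)) ∧
    C = T * Matrix.diagonal d * T⁻¹ * (Matrix.diagonal d)⁻¹ := by
  have hTdet : T.det = 1 := by
    have h := Matrix.det_of_upperTriangular (M := T) (fun i j hij => hT.1 i j hij)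
    simp [h, hT.2]
  have hTunit : IsUnit T.det := by rw [hTdet]; exact isUnit_one
  have hTT : T * T⁻¹ = 1 := Matrix.mul_nonsing_inv T hTunit
  have hTT' : T⁻¹ * T = 1 := Matrix.nonsing_inv_mul T hTunit
  have hDdet : IsUnit (Matrix.diagonal d).det := by
    rw [Matrix.det_diagonal]
    exact isUnit_iff_ne_zero.mpr (Finset.prod_ne_zero_iff.mpr fun i _ => hd i)
  have key : C * Matrix.diagonal d * T = T * Matrix.diagonal d := by
    calc C * Matrix.diagonal d * T
        = T * (T⁻¹ * (C * Matrix.diagonal d) * T) := by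
          simp only [← mul_assoc]; rw [hTT, one_mul]
      _ = T * Matrix.diagonal d := by rw [hconj]
  constructor
  · intro i j hij
    have hentry : (∑ k, C i k * d k * T k j) = T i j * d j := by
      have := congrFun (congrFun key i) j
      simpa [Matrix.mul_apply, Matrix.diagonal_apply, mul_ite, ite_mul, mul_zero,
        zero_mul, Finset.sum_ite_eq, Finset.sum_ite_eq'] using this
    have hsplit : (∑ k, C i k * d k * T k j)
        = d i * T i j + (∑ k ∈ Finset.Ioo i j, C i k * d k * T k j) + C i j * d j := by
      have h1 : (∑ k, C i k * d k * T k j) = ∑ k ∈ Finset.Icc i j, C i k * d k * T k j := by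
        refine (Finset.sum_subset (Finset.subset_univ _) ?_).symm
        intro k _ hk
        rw [Finset.mem_Icc, not_and_or] at hk
        rcases hk with hk | hk
        · rw [hC.1 i k (lt_of_not_ge hk)]; ring
        · rw [hT.1 k j (lt_of_not_ge hk)]; ring
      have h2 : Finset.Icc i j = insert i (Finset.Ioc i j) := by
        rw [Finset.Ioc_insert_left hij.le]
      have h3 : Finset.Ioc i j = insert j (Finset.Ioo i j) := by
        rw [Finset.Ioo_insert_right hij]
      rw [h1, h2, Finset.sum_insert (by simp), h3, Finset.sum_insert (by simp),
        hC.2 i, hT.2 j]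
      ring
    have hdj := hd j
    have hsum : (∑ k ∈ Finset.Ioo i j, C i k * T k j * (d k * (d j)⁻¹))
        = (∑ k ∈ Finset.Ioo i j, C i k * d k * T k j) * (d j)⁻¹ := by
      rw [Finset.sum_mul]; exact Finset.sum_congr rfl fun k _ => by ring
    rw [hsum]
    have heq : d i * T i j + (∑ k ∈ Finset.Ioo i j, C i k * d k * T k j) + C i j * d j
        = T i j * d j := by rw [← hsplit, hentry]
    have hinv : d j * (d j)⁻¹ = 1 := mul_inv_cancel₀ hdj
    linear_combination (-(d j)⁻¹) * heq + (C i j - T i j) * hinv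
  · have hDD : Matrix.diagonal d * (Matrix.diagonal d)⁻¹ = 1 :=
      Matrix.mul_nonsing_inv _ hDdet
    have h1 : C * Matrix.diagonal d = T * Matrix.diagonal d * T⁻¹ := by
      calc C * Matrix.diagonal d = C * Matrix.diagonal d * T * T⁻¹ := by
            rw [mul_assoc, hTT, mul_one]
        _ = T * Matrix.diagonal d * T⁻¹ := by rw [key]
    calc C = C * Matrix.diagonal d * (Matrix.diagonal d)⁻¹ := by
            rw [mul_assoc, hDD, mul_one]
      _ = T * Matrix.diagonal d * T⁻¹ * (Matrix.diagonal d)⁻¹ := by rw [h1]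
end

section
/- Let D be an invertible diagonal n×n complex matrix with D_{ii}D_{jj}⁻¹ ≠ 1 for i ≠ j, C unipotent upper triangular, and T the unique unipotent upper triangular matrix with T⁻¹(CD)T = D. Fix j ∈ {1,...,n}. Then: (a) the j-th column of C equals the j-th column of the identity matrix if and only if the j-th column of T equals the j-th column of the identity matrix; (b) the j-th row of C equals the j-th row of the identity if and only if the j-th row of T equals the j-th row of the identity. -/
open Matrix

/-!
Put `M = C D`, so that `M T = T D`.

Columns: the `j`-th column of `T` is a `d j`-eigenvector of `M`, and `M e_j = d j • C e_j`.
If `T e_j = e_j` this gives `C e_j = e_j`. Conversely, if `C e_j = e_j` then `T e_j - e_j` is a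
`d j`-eigenvector of the upper triangular `M` supported on indices `< j`; at its last nonzero
entry `i` we would get `d i = d j`, so it vanishes.

Rows: `e_jᵀ M T = e_jᵀ T D`. If `e_jᵀ C = e_jᵀ` the left side is `d j • e_jᵀ T`, and
nonresonance kills the off-diagonal entries of the `j`-th row of `T`. If `e_jᵀ T = e_jᵀ` the
identity reads `e_jᵀ C D T = e_jᵀ D T`, and cancelling the invertible `T` and `D` gives
`e_jᵀ C = e_jᵀ`.
-/

open Function

namespace Matrix

variable {ι R : Type*}

theorem IsUpperTriangular.eq_zero_of_mulVec_eq_smul_s7 [Fintype ι] [LinearOrder ι] [CommRing R]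
    [IsDomain R] {M : Matrix ι ι R} (hM : M.IsUpperTriangular) {w : ι → R} {μ : R}
    (hw : M *ᵥ w = μ • w) (hμ : ∀ i, w i ≠ 0 → M i i ≠ μ) : w = 0 := by
  by_contra hne
  obtain ⟨i, hwi, hmax⟩ := w.support.exists_max_image id w.support.toFinite
    (support_nonempty_iff.mpr hne)
  have hlast : ∀ k, i < k → w k = 0 := fun k hik => by
    by_contra hk
    exact (hmax k hk).not_gt hik
  have hdiag : (M *ᵥ w) i = M i i * w i := by
    refine Finset.sum_eq_single i (fun k _ hki => ?_) (by simp)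
    rcases hki.lt_or_gt with hk | hk
    · exact mul_eq_zero_of_left (hM hk) _
    · exact mul_eq_zero_of_right _ (hlast k hk)
  refine hμ i hwi (mul_right_cancel₀ hwi ?_)
  rw [← hdiag, hw, Pi.smul_apply, smul_eq_mul]

variable [DecidableEq ι]

theorem col_eq_single_iff [Zero R] [One R] {A : Matrix ι ι R} {j : ι} :
    A.col j = Pi.single j 1 ↔ ∀ i, A i j = (1 : Matrix ι ι R) i j := by
  simp only [funext_iff, col_apply, one_apply, Pi.single_apply]

theorem row_eq_single_iff [Zero R] [One R] {A : Matrix ι ι R} {j : ι} :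
    A.row j = Pi.single j 1 ↔ ∀ i, A j i = (1 : Matrix ι ι R) j i := by
  simp only [funext_iff, row_apply, one_apply, Pi.single_apply, eq_comm (a := j)]

variable [Fintype ι] [CommRing R]

theorem col_mul_diagonal (C : Matrix ι ι R) (d : ι → R) (j : ι) :
    (C * diagonal d).col j = d j • C.col j := by
  ext i
  simp [mul_comm]

theorem vecMul_diagonal_injective [IsDomain R] {d : ι → R} (hd : ∀ i, d i ≠ 0) :
    Injective (· ᵥ* diagonal d) := fun v w hvw => by
  ext k
  apply mul_right_cancel₀ (hd k)
  simpa only [vecMul_diagonal] using congrFun hvw k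

theorem mulVec_col_eq_smul_of_mul_eq_mul_diagonal {M T : Matrix ι ι R} {d : ι → R}
    (h : M * T = T * diagonal d) (j : ι) : M *ᵥ T.col j = d j • T.col j := by
  rw [← mulVec_single_one, mulVec_mulVec, h, ← mulVec_mulVec, diagonal_mulVec_single, mul_one]
  ext i
  simp [mul_comm]

theorem col_eq_single_iff_of_mul_diagonal_mul_eq [LinearOrder ι] [IsDomain R]
    {C T : Matrix ι ι R} {d : ι → R} (h : C * diagonal d * T = T * diagonal d)
    (hC : C.IsUpperTriangular) (hC₁ : ∀ i, C i i = 1) (hT : T.IsUpperTriangular)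
    (hT₁ : ∀ i, T i i = 1) (hd : ∀ i, d i ≠ 0) (hd_inj : Injective d) (j : ι) :
    C.col j = Pi.single j 1 ↔ T.col j = Pi.single j 1 := by
  have heig := mulVec_col_eq_smul_of_mul_eq_mul_diagonal h j
  constructor
  · intro hCj
    have hw : (C * diagonal d) *ᵥ (T.col j - Pi.single j 1) =
        d j • (T.col j - Pi.single j 1) := by
      rw [mulVec_sub, heig, mulVec_single_one, col_mul_diagonal, hCj, smul_sub]
    refine sub_eq_zero.mp <| IsUpperTriangular.eq_zero_of_mulVec_eq_smul_s7
      (hC.mul (blockTriangular_diagonal d)) hw fun i hi => ?_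
    have hij : i < j := by
      by_contra! hji
      rcases hji.lt_or_eq with hji | rfl
      · simp [hT hji, hji.ne'] at hi
      · simp [hT₁] at hi
    rw [mul_diagonal, hC₁, one_mul]
    exact hd_inj.ne hij.ne
  · intro hTj
    rw [hTj, mulVec_single_one, col_mul_diagonal] at heig
    exact smul_right_injective _ (hd j) heig

theorem row_eq_single_iff_of_mul_diagonal_mul_eq [IsDomain R] {C T : Matrix ι ι R} {d : ι → R}
    (h : C * diagonal d * T = T * diagonal d) (hT : IsUnit T) (hd : ∀ i, d i ≠ 0)
    (hd_inj : Injective d) (j : ι) (hT₁ : T j j = 1) :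
    C.row j = Pi.single j 1 ↔ T.row j = Pi.single j 1 := by
  have hrow : C.row j ᵥ* diagonal d ᵥ* T = T.row j ᵥ* diagonal d := congrFun h j
  constructor
  · intro hCj
    rw [hCj, single_vecMul_diagonal, one_mul, single_vecMul] at hrow
    ext k
    have hk := congrFun hrow k
    rw [Pi.smul_apply, vecMul_diagonal, smul_eq_mul, row_apply] at hk
    rcases eq_or_ne k j with rfl | hkj
    · simp [hT₁]
    · have hprod : (d j - d k) * T j k = 0 := by linear_combination hk
      simp [(mul_eq_zero.mp hprod).resolve_left (sub_ne_zero.mpr (hd_inj.ne hkj.symm)), hkj]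
  · intro hTj
    apply vecMul_diagonal_injective hd
    apply vecMul_injective_of_isUnit hT
    change C.row j ᵥ* diagonal d ᵥ* T = Pi.single j 1 ᵥ* diagonal d ᵥ* T
    rw [hrow, hTj, single_vecMul_diagonal, one_mul, single_vecMul, hTj]
    ext k
    simp [Pi.single_apply]

end Matrix

/-- Trivial rows/columns correspond: if `T⁻¹(CD)T = D` with `C`, `T` unipotent
upper triangular and `D = diagonal d` nonresonant, then for a fixed index `j`
the `j`-th column of `C` is the `j`-th column of the identity iff the same holds
for `T`, and likewise for the `j`-th rows. -/
theorem trivial_row_column_correspondence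
    {n : ℕ} (d : Fin n → ℂ) (hd : ∀ i, d i ≠ 0)
    (hres : ∀ i j : Fin n, i ≠ j → d i * (d j)⁻¹ ≠ 1)
    (C T : Matrix (Fin n) (Fin n) ℂ)
    (hC : IsUnipotentUpper C) (hT : IsUnipotentUpper T)
    (hconj : T⁻¹ * (C * Matrix.diagonal d) * T = Matrix.diagonal d)
    (j : Fin n) :
    ((∀ i : Fin n, C i j = (1 : Matrix (Fin n) (Fin n) ℂ) i j) ↔
      (∀ i : Fin n, T i j = (1 : Matrix (Fin n) (Fin n) ℂ) i j)) ∧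
    ((∀ i : Fin n, C j i = (1 : Matrix (Fin n) (Fin n) ℂ) j i) ↔
      (∀ i : Fin n, T j i = (1 : Matrix (Fin n) (Fin n) ℂ) j i)) := by
  obtain ⟨hC_tri, hC₁⟩ := hC
  obtain ⟨hT_tri, hT₁⟩ := hT
  have hd_inj : Injective d := fun i k hik => by
    by_contra hne
    exact hres i k hne (by rw [hik, mul_inv_cancel₀ (hd k)])
  have hT_det : IsUnit T.det := by
    rw [det_of_isUpperTriangular fun i k => hT_tri i k]
    simp [hT₁]
  have hCT : C * diagonal d * T = T * diagonal d :=
    calc C * diagonal d * T = T * (T⁻¹ * (C * diagonal d) * T) := by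
          rw [← Matrix.mul_assoc, ← Matrix.mul_assoc, mul_nonsing_inv T hT_det, Matrix.one_mul]
      _ = T * diagonal d := by rw [hconj]
  simp only [← col_eq_single_iff, ← row_eq_single_iff]
  exact ⟨col_eq_single_iff_of_mul_diagonal_mul_eq hCT (fun i k => hC_tri i k) hC₁
      (fun i k => hT_tri i k) hT₁ hd hd_inj j,
    row_eq_single_iff_of_mul_diagonal_mul_eq hCT ((isUnit_iff_isUnit_det T).mpr hT_det) hd
      hd_inj j (hT₁ j)⟩
end
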